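/- Let P and Q be n×n orthogonal projection matrices and let C be any matrix similar to PQ that is also symmetric positive semidefinite. If moreover rank(I − PQ) = n (i.e., 1 is not an eigenvalue of PQ), then the spectral norm of C is strictly less than 1 and I − C is invertible with (I − C)^{−1} = Σ_{r≥0} C^r. -/
import Mathlib


open Matrix BigOperators

open Classical in
/-- Moore–Penrose pseudoinverse of a real matrix (defined via the four Penrose conditions,
which determine it uniquely; it always exists for real matrices). -/
noncomputable def mpinv {m n : ℕ} (M : Matrix (Fin m) (Fin n) ℝ) : Matrix (Fin n) (Fin m) ℝ :=
  if h : ∃ N : Matrix (Fin n) (Fin m) ℝ,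
      M * N * M = M ∧ N * M * N = N ∧ (M * N)ᵀ = M * N ∧ (N * M)ᵀ = N * M
  then h.choose else 0

/-- The diagonal matrix `D^{-1/2}` for `D = diag d`. -/
noncomputable def dhalfInv {n : ℕ} (d : Fin n → ℝ) : Matrix (Fin n) (Fin n) ℝ :=
  Matrix.diagonal fun i => 1 / Real.sqrt (d i)

/-- The generalized inverse `M* = D^{-1/2} (D^{-1/2} M D^{-1/2})† D^{-1/2}`. -/
noncomputable def gstar {n : ℕ} (d : Fin n → ℝ) (M : Matrix (Fin n) (Fin n) ℝ) :
    Matrix (Fin n) (Fin n) ℝ :=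
  dhalfInv d * mpinv (dhalfInv d * M * dhalfInv d) * dhalfInv d

/-- Connectivity of the weighted graph with adjacency matrix `A`. -/
def Conn {n : ℕ} (A : Matrix (Fin n) (Fin n) ℝ) : Prop :=
  ∀ i j : Fin n, Relation.ReflTransGen (fun a b => A a b ≠ 0) i j

section Aux

private lemma dps_nonneg' {n : ℕ} (v : Fin n → ℝ) : 0 ≤ v ⬝ᵥ v :=
  Finset.sum_nonneg fun _ _ => mul_self_nonneg _

private lemma dps_pos' {n : ℕ} {v : Fin n → ℝ} (h : v ≠ 0) : 0 < v ⬝ᵥ v :=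
  lt_of_le_of_ne (dps_nonneg' v) (fun he => h (dotProduct_self_eq_zero.mp he.symm))

private lemma proj_contract' {n : ℕ} (A : Matrix (Fin n) (Fin n) ℝ) (hAs : Aᵀ = A)
    (hAi : A * A = A) (v : Fin n → ℝ) :
    (A *ᵥ v) ⬝ᵥ (A *ᵥ v) ≤ v ⬝ᵥ v := by
  have key : ∀ (B : Matrix (Fin n) (Fin n) ℝ), Bᵀ = B → B * B = B →
      ∀ w : Fin n → ℝ, (B *ᵥ w) ⬝ᵥ (B *ᵥ w) = w ⬝ᵥ (B *ᵥ w) := by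
    intro B hBs hBi w
    have e : w ⬝ᵥ ((Bᵀ * B) *ᵥ w) = (B *ᵥ w) ⬝ᵥ (B *ᵥ w) := by
      rw [← mulVec_mulVec, dotProduct_mulVec, vecMul_transpose]
    rw [← e, hBs, hBi]
  have h1 := key A hAs hAi v
  have hBs : (1 - A)ᵀ = 1 - A := by rw [transpose_sub, transpose_one, hAs]
  have hBi : (1 - A) * (1 - A) = 1 - A := by noncomm_ring [hAi]
  have h2 := key (1 - A) hBs hBi v
  have h3 : 0 ≤ ((1 - A) *ᵥ v) ⬝ᵥ ((1 - A) *ᵥ v) := dps_nonneg' _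
  rw [h2] at h3
  rw [h1]
  have : v ⬝ᵥ ((1 - A) *ᵥ v) = v ⬝ᵥ v - v ⬝ᵥ (A *ᵥ v) := by
    rw [sub_mulVec, dotProduct_sub, one_mulVec]
  linarith [this ▸ h3]

private lemma unit_of_rank' {n : ℕ} (A : Matrix (Fin n) (Fin n) ℝ) (h : A.rank = n) :
    IsUnit A := by
  rw [← Matrix.mulVec_injective_iff_isUnit]
  have hsurj : Function.Surjective A.mulVecLin := by
    rw [← LinearMap.range_eq_top]
    apply Submodule.eq_top_of_finrank_eq
    rw [Matrix.rank] at h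
    rw [h, Module.finrank_fintype_fun_eq_card, Fintype.card_fin]
  have := LinearMap.injective_iff_surjective.mpr hsurj
  simpa [Matrix.coe_mulVecLin] using this

private lemma eig_lt_one' {n : ℕ} (P Q : Matrix (Fin n) (Fin n) ℝ)
    (hPs : Pᵀ = P) (hPi : P * P = P) (hQs : Qᵀ = Q) (hQi : Q * Q = Q)
    (T : Matrix (Fin n) (Fin n) ℝ) (hT : IsUnit T.det)
    (hrank : (1 - P * Q).rank = n)
    (μ : ℝ) (x : Fin n → ℝ) (hx : x ≠ 0)
    (hμ : (T⁻¹ * (P * Q) * T) *ᵥ x = μ • x) : μ < 1 := by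
  set y := T *ᵥ x with hy
  have hTu : IsUnit T := (Matrix.isUnit_iff_isUnit_det T).mpr hT
  have hyne : y ≠ 0 := by
    intro h0
    apply hx
    have := Matrix.mulVec_injective_iff_isUnit.mpr hTu
    apply this
    rw [← hy, h0, mulVec_zero]
  have hPQy : (P * Q) *ᵥ y = μ • y := by
    have h1 : T *ᵥ ((T⁻¹ * (P * Q) * T) *ᵥ x) = T *ᵥ (μ • x) := by rw [hμ]
    rw [mulVec_mulVec, ← Matrix.mul_assoc, ← Matrix.mul_assoc,
      Matrix.mul_nonsing_inv T hT, Matrix.one_mul] at h1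
    rw [hy, mulVec_mulVec, Matrix.mul_assoc] at *
    rw [← mulVec_mulVec] at h1 ⊢
    rw [h1, mulVec_smul]
  have hQy := proj_contract' Q hQs hQi y
  have hPy := proj_contract' P hPs hPi (Q *ᵥ y)
  have hPQ : (P * Q) *ᵥ y = P *ᵥ (Q *ᵥ y) := (mulVec_mulVec _ _ _).symm
  have hsq : (μ • y) ⬝ᵥ (μ • y) = μ ^ 2 * (y ⬝ᵥ y) := by
    rw [smul_dotProduct, dotProduct_smul, smul_eq_mul, smul_eq_mul]; ring
  have hpos : 0 < y ⬝ᵥ y := dps_pos' hyne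
  have hμ2 : μ ^ 2 ≤ 1 := by
    have : μ ^ 2 * (y ⬝ᵥ y) ≤ y ⬝ᵥ y := by
      rw [← hsq, ← hPQy, hPQ]
      exact le_trans hPy hQy
    nlinarith
  have hne : μ ≠ 1 := by
    intro h1
    subst h1
    have h0 : (1 - P * Q) *ᵥ y = 0 := by
      rw [sub_mulVec, one_mulVec, hPQy, one_smul, sub_self]
    have hinj := Matrix.mulVec_injective_iff_isUnit.mpr (unit_of_rank' _ hrank)
    apply hyne
    apply hinj
    rw [h0, mulVec_zero]
  have : μ ≤ 1 := by nlinarith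
  exact lt_of_le_of_ne this hne

private lemma neumann' {n : ℕ} (C : Matrix (Fin n) (Fin n) ℝ) (hC : C.PosSemidef)
    (hlt : ∀ i, hC.1.eigenvalues i < 1) :
    IsUnit (1 - C) ∧ Summable (fun r : ℕ => C ^ r) ∧ (1 - C)⁻¹ = ∑' r : ℕ, C ^ r := by
  classical
  have hH : C.IsHermitian := hC.1
  set U : Matrix (Fin n) (Fin n) ℝ := (hH.eigenvectorUnitary : Matrix (Fin n) (Fin n) ℝ) with hU
  set lam : Fin n → ℝ := hH.eigenvalues with hlam
  have hUU : star U * U = 1 := by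
    have := hH.eigenvectorUnitary.2
    rw [Matrix.mem_unitaryGroup_iff'] at this
    exact this
  have hUUs : U * star U = 1 := by
    have := hH.eigenvectorUnitary.2
    rw [Matrix.mem_unitaryGroup_iff] at this
    exact this
  have hspec : C = U * diagonal lam * star U := by
    have := hH.spectral_theorem
    simpa using this
  have hlam0 : ∀ i, 0 ≤ lam i := fun i => hC.eigenvalues_nonneg i
  let L : (Fin n → ℝ) →ₗ[ℝ] Matrix (Fin n) (Fin n) ℝ :=
    { toFun := fun d => U * diagonal d * star U
      map_add' := by
        intro a b
        show U * diagonal (a + b) * star U =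
          U * diagonal a * star U + U * diagonal b * star U
        have e : diagonal (a + b) = diagonal a + diagonal b := (diagonal_add a b).symm
        rw [e, Matrix.mul_add, Matrix.add_mul]
      map_smul' := by
        intro c a
        show U * diagonal (c • a) * star U = c • (U * diagonal a * star U)
        rw [diagonal_smul, Matrix.mul_smul, Matrix.smul_mul] }
  have hLcont : Continuous L := L.continuous_of_finiteDimensional
  have hLmul : ∀ a b : Fin n → ℝ, L a * L b = L (a * b) := by
    intro a b
    show U * diagonal a * star U * (U * diagonal b * star U) = U * diagonal (a * b) * star U
    simp only [Matrix.mul_assoc]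
    rw [← Matrix.mul_assoc (star U) U, hUU, Matrix.one_mul,
      ← Matrix.mul_assoc (diagonal a) (diagonal b), diagonal_mul_diagonal]
    rfl
  have hL1 : L 1 = 1 := by
    show U * diagonal (1 : Fin n → ℝ) * star U = 1
    have e : diagonal (1 : Fin n → ℝ) = (1 : Matrix (Fin n) (Fin n) ℝ) := diagonal_one
    rw [e, Matrix.mul_one, hUUs]
  have hpow : ∀ r : ℕ, C ^ r = L (fun i => lam i ^ r) := by
    intro r
    induction r with
    | zero =>
      have h0 : (fun i => lam i ^ 0) = (1 : Fin n → ℝ) := by funext i; simp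
      rw [pow_zero, h0, hL1]
    | succ r ih =>
      rw [pow_succ, ih, hspec]
      have h1 : U * diagonal lam * star U = L lam := rfl
      rw [h1, hLmul]
      have harg : ((fun i => lam i ^ r) * lam) = fun i => lam i ^ (r + 1) := by
        funext i; simp [pow_succ]
      rw [harg]
  set f : ℕ → (Fin n → ℝ) := fun r i => lam i ^ r with hfdef
  have hf : Summable f := by
    rw [Pi.summable]
    intro i
    exact summable_geometric_of_lt_one (hlam0 i) (hlt i)
  have hCf : (fun r : ℕ => C ^ r) = (fun r => L (f r)) := funext fun r => hpow r
  have hsum : Summable (fun r : ℕ => C ^ r) := by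
    rw [hCf]
    exact (hf.hasSum.map L.toAddMonoidHom hLcont).summable
  have htsumf : (∑' r : ℕ, f r) = fun i => (1 - lam i)⁻¹ := by
    funext i
    rw [tsum_apply hf]
    exact tsum_geometric_of_lt_one (hlam0 i) (hlt i)
  have htsum : (∑' r : ℕ, C ^ r) = L (fun i => (1 - lam i)⁻¹) := by
    rw [hCf]
    have h2 := (hf.hasSum.map L.toAddMonoidHom hLcont).tsum_eq
    have h3 : (⇑L.toAddMonoidHom ∘ f) = fun r => L (f r) := rfl
    rw [h3] at h2
    rw [h2, htsumf]
    rfl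
  have hone : (1 - C) = L (fun i => 1 - lam i) := by
    have h4 : (fun i => 1 - lam i) = (1 : Fin n → ℝ) - lam := rfl
    rw [h4, map_sub, hL1, hspec]
    rfl
  have hne1 : ∀ i, (1 : ℝ) - lam i ≠ 0 := fun i => sub_ne_zero.mpr (hlt i).ne'
  have hmul1 : (1 - C) * (∑' r : ℕ, C ^ r) = 1 := by
    rw [hone, htsum, hLmul, ← hL1]
    congr 1
    funext i
    simp [mul_inv_cancel₀ (hne1 i)]
  have hmul2 : (∑' r : ℕ, C ^ r) * (1 - C) = 1 := by
    rw [hone, htsum, hLmul, ← hL1]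
    congr 1
    funext i
    simp [inv_mul_cancel₀ (hne1 i)]
  refine ⟨⟨⟨1 - C, ∑' r : ℕ, C ^ r, hmul1, hmul2⟩, rfl⟩, hsum, ?_⟩
  exact Matrix.inv_eq_right_inv hmul1

end Aux

/-- if `C` is symmetric psd and similar to a product `PQ` of orthogonal
projections with `rank(I - PQ) = n`, then every eigenvalue of `C` is `< 1` (its spectral
norm is `< 1`), and `I - C` is invertible with `(I - C)⁻¹ = Σ_{r≥0} Cʳ`. -/
theorem stmt18 {n : ℕ} (P Q : Matrix (Fin n) (Fin n) ℝ)
    (hPs : Pᵀ = P) (hPi : P * P = P) (hQs : Qᵀ = Q) (hQi : Q * Q = Q)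
    (C T : Matrix (Fin n) (Fin n) ℝ) (hT : IsUnit T.det)
    (hC : C = T⁻¹ * (P * Q) * T) (hCpsd : C.PosSemidef)
    (hrank : (1 - P * Q).rank = n) :
    (∀ (μ : ℝ) (x : Fin n → ℝ), x ≠ 0 → C *ᵥ x = μ • x → μ < 1) ∧
    IsUnit (1 - C) ∧
    Summable (fun r : ℕ => C ^ r) ∧
    (1 - C)⁻¹ = ∑' r : ℕ, C ^ r := by
  have part1 : ∀ (μ : ℝ) (x : Fin n → ℝ), x ≠ 0 → C *ᵥ x = μ • x → μ < 1 := by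
    intro μ x hx hμx
    exact eig_lt_one' P Q hPs hPi hQs hQi T hT hrank μ x hx (hC ▸ hμx)
  have hlt : ∀ i, hCpsd.1.eigenvalues i < 1 := by
    intro i
    have hvne : (⇑(hCpsd.1.eigenvectorBasis i) : Fin n → ℝ) ≠ 0 := by
      have h := hCpsd.1.eigenvectorBasis.orthonormal.ne_zero i
      intro h0
      apply h
      ext j
      exact congrFun h0 j
    exact part1 _ _ hvne (hCpsd.1.mulVec_eigenvectorBasis i)
  obtain ⟨h1, h2, h3⟩ := neumann' C hCpsd hlt
  exact ⟨part1, h1, h2, h3⟩
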